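/- arXiv:2308.02014 — 4 statements merged into one kernel-verified Lean document; each statement's English description precedes it below -/
import Mathlib

section
/- Let 0 < 2γ < λ, let x̄, x, z ∈ ℝⁿ and g ∈ ℝⁿ be such that x = z + (λ−γ)g, ⟨g, z − x̄⟩ ≥ 0 (monotonicity of a gradient at z relative to a critical point x̄ where the gradient vanishes), and ‖x − x̄‖² ≥ ‖x−z‖² + ‖z−x̄‖². Define y := z − γ(λ−γ)⁻¹(x−z). Then ‖y − x̄‖ ≤ ‖x − x̄‖. -/
open InnerProductSpace

theorem prox_step_nonexpansive
    (n : ℕ) (γ lam : ℝ) (hγ : 0 < γ) (hgl : 2 * γ < lam)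
    (xbar x z g : EuclideanSpace ℝ (Fin n))
    (hx : x = z + (lam - γ) • g)
    (hmono : 0 ≤ ⟪g, z - xbar⟫_ℝ)
    (hdist : ‖x - z‖ ^ 2 + ‖z - xbar‖ ^ 2 ≤ ‖x - xbar‖ ^ 2) :
    ‖(z - (γ * (lam - γ)⁻¹) • (x - z)) - xbar‖ ≤ ‖x - xbar‖ := by
  have hlg : (0:ℝ) < lam - γ := by linarith
  have hxz : x - z = (lam - γ) • g := by rw [hx]; abel
  have hkey : (z - (γ * (lam - γ)⁻¹) • (x - z)) - xbar = (z - xbar) - γ • g := by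
    rw [hxz, smul_smul]
    rw [mul_assoc, inv_mul_cancel₀ hlg.ne', mul_one]
    abel
  rw [hkey]
  have hnxz : ‖x - z‖ = (lam - γ) * ‖g‖ := by
    rw [hxz, norm_smul, Real.norm_eq_abs, abs_of_pos hlg]
  have hexp : ‖(z - xbar) - γ • g‖ ^ 2
      = ‖z - xbar‖ ^ 2 - 2 * (γ * ⟪g, z - xbar⟫_ℝ) + γ ^ 2 * ‖g‖ ^ 2 := by
    rw [norm_sub_sq_real, norm_smul, real_inner_smul_right,
      real_inner_comm, Real.norm_eq_abs, abs_of_pos hγ]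
    ring
  rw [hnxz] at hdist
  have hsq : ‖(z - xbar) - γ • g‖ ^ 2 ≤ ‖x - xbar‖ ^ 2 := by
    nlinarith [hexp, hdist, mul_nonneg hγ.le hmono, sq_nonneg ‖g‖,
      mul_pos (show (0:ℝ) < lam by linarith) (show (0:ℝ) < lam - 2*γ by linarith)]
  nlinarith [hsq, norm_nonneg ((z - xbar) - γ • g), norm_nonneg (x - xbar)]
end

section
/- Let f : ℝⁿ → ℝ and λ > 0 and suppose x⁺ minimizes y ↦ f(y) + (1/(2λ))‖y−x‖², that the Moreau envelope e_λ f is differentiable at x with ∇e_λ f(x) = (1/λ)(x − x⁺), and that e_λ f is convex on a convex set C containing x. Then for every w ∈ C: ‖x⁺ − w‖² ≤ ‖x − w‖² + 2λ(f(w) − f(x⁺)). -/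
/-!
Convexity and differentiability of `e = e_λ f` at `x` give the tangent inequality
`⟪∇e(x), w - x⟫ ≤ e w - e x`. Bounding `e w ≤ f w`, inserting
`e x = f x⁺ + ‖x⁺ - x‖² / (2λ)` and expanding `‖x⁺ - w‖² = ‖(x⁺ - x) + (x - w)‖²`
turns it into the claim after multiplication by `2λ > 0`.
-/

open InnerProductSpace

section FirstOrderCondition

variable {E : Type*} [NormedAddCommGroup E] [NormedSpace ℝ E] {C : Set E} {e : E → ℝ}
  {e' : StrongDual ℝ E} {x w : E}

theorem ConvexOn.le_sub_of_hasFDerivAt (hconv : ConvexOn ℝ C e) (hderiv : HasFDerivAt e e' x)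
    (hx : x ∈ C) (hw : w ∈ C) : e' (w - x) ≤ e w - e x := by
  set γ : ℝ →ᵃ[ℝ] E := AffineMap.lineMap x w
  have hline : ConvexOn ℝ (γ ⁻¹' C) (e ∘ γ) := hconv.comp_affineMap γ
  have hderiv_line : HasDerivAt (e ∘ γ) (e' (w - x)) 0 := by
    rw [← AffineMap.lineMap_apply_zero (k := ℝ) x w] at hderiv
    exact hderiv.comp_hasDerivAt 0 AffineMap.hasDerivAt_lineMap
  have h0 : γ 0 = x := AffineMap.lineMap_apply_zero x w
  have h1 : γ 1 = w := AffineMap.lineMap_apply_one x w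
  have hslope := hline.le_slope_of_hasDerivAt (by simpa [h0] using hx) (by simpa [h1] using hw)
    zero_lt_one hderiv_line
  simpa [slope_def_field, h0, h1] using hslope

end FirstOrderCondition

theorem ConvexOn.inner_le_sub_of_hasGradientAt {E : Type*} [NormedAddCommGroup E]
    [InnerProductSpace ℝ E] [CompleteSpace E] {C : Set E} {e : E → ℝ} {g x w : E}
    (hconv : ConvexOn ℝ C e) (hgrad : HasGradientAt e g x) (hx : x ∈ C) (hw : w ∈ C) :
    ⟪g, w - x⟫_ℝ ≤ e w - e x := by
  simpa using hconv.le_sub_of_hasFDerivAt hgrad.hasFDerivAt hx hw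

theorem prox_fejer_inequality_general
    (n : ℕ) (f : EuclideanSpace ℝ (Fin n) → ℝ) (lam : ℝ) (hlam : 0 < lam)
    (e : EuclideanSpace ℝ (Fin n) → ℝ)
    (x xp : EuclideanSpace ℝ (Fin n))
    (hle : ∀ u, e u ≤ f u)
    (hval : e x = f xp + 1 / (2 * lam) * ‖xp - x‖ ^ 2)
    (C : Set (EuclideanSpace ℝ (Fin n))) (hxC : x ∈ C)
    (hconv : ConvexOn ℝ C e)
    (hgrad : HasGradientAt e ((1 / lam) • (x - xp)) x) :
    ∀ w ∈ C, ‖xp - w‖ ^ 2 ≤ ‖x - w‖ ^ 2 + 2 * lam * (f w - f xp) := by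
  intro w hw
  have htangent : lam⁻¹ * ⟪x - xp, w - x⟫_ℝ ≤ f w - f xp - 1 / (2 * lam) * ‖x - xp‖ ^ 2 := by
    have h := hconv.inner_le_sub_of_hasGradientAt hgrad hxC hw
    rw [one_div, real_inner_smul_left, hval, norm_sub_rev xp x] at h
    linarith [hle w]
  have hexpand : ‖xp - w‖ ^ 2 = ‖x - w‖ ^ 2 + 2 * ⟪x - xp, w - x⟫_ℝ + ‖x - xp‖ ^ 2 := by
    rw [← sub_add_sub_cancel xp x w, norm_add_sq_real, ← inner_neg_neg, neg_sub, neg_sub,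
      norm_sub_rev xp x]
    ring
  field_simp at htangent
  linarith

theorem prox_fejer_inequality
    (n : ℕ) (f : EuclideanSpace ℝ (Fin n) → ℝ) (lam : ℝ) (hlam : 0 < lam)
    (e : EuclideanSpace ℝ (Fin n) → ℝ)
    (he : ∀ u, e u = ⨅ y, (f y + 1 / (2 * lam) * ‖y - u‖ ^ 2))
    (x xp : EuclideanSpace ℝ (Fin n))
    (hmin : IsMinOn (fun y => f y + 1 / (2 * lam) * ‖y - x‖ ^ 2) Set.univ xp)
    (hle : ∀ u, e u ≤ f u)
    (hval : e x = f xp + 1 / (2 * lam) * ‖xp - x‖ ^ 2)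
    (C : Set (EuclideanSpace ℝ (Fin n))) (hC : Convex ℝ C) (hxC : x ∈ C)
    (hconv : ConvexOn ℝ C e)
    (hgrad : HasGradientAt e ((1 / lam) • (x - xp)) x) :
    ∀ w ∈ C, ‖xp - w‖ ^ 2 ≤ ‖x - w‖ ^ 2 + 2 * lam * (f w - f xp) :=
  prox_fejer_inequality_general n f lam hlam e x xp hle hval C hxC hconv hgrad
end

section
/- Let f(x) = max{2 − x², x²} on ℝ and let 0 < λ ≤ 1/4. Then for all x ∈ [1 − 2λ, 1 + 2λ], the proximal point P_λ f(x) = argmin_y { f(y) + (1/(2λ))(y−x)² } equals 1, and the Moreau envelope satisfies e_λ f(x) = 1 + (1/(2λ))(x−1)². -/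
/-!
With `c = 1/(2λ) ≥ 2`, `f` has a kink at `1`, quantified by
`f y ≥ 1 + 2|y - 1| - (y - 1)²`. Perturbing by `c (y - x)²` moves the linear term by at most
`2c|1 - x| |y - 1| ≤ 2|y - 1|`, so the kink at `1` survives and
`f y + c (y - x)² ≥ 1 + c (1 - x)² + (c - 1)(y - 1)²`, which makes `1` the unique minimizer.
-/

theorem le_add_mul_norm_sub_sq_of_sharp_lower_bound {E : Type*} [SeminormedAddCommGroup E]
    {g : E → ℝ} {a x : E} {L μ c : ℝ}
    (hg : ∀ y, g a + L * ‖y - a‖ - μ * ‖y - a‖ ^ 2 ≤ g y) (hc : 0 ≤ c)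
    (hx : 2 * c * ‖a - x‖ ≤ L) (y : E) :
    g a + c * ‖a - x‖ ^ 2 + (c - μ) * ‖y - a‖ ^ 2 ≤ g y + c * ‖y - x‖ ^ 2 := by
  have htri : (‖y - a‖ - ‖a - x‖) ^ 2 ≤ ‖y - x‖ ^ 2 := by
    rw [← sq_abs]
    gcongr
    have h := abs_norm_sub_norm_le (y - a) (x - a)
    rwa [norm_sub_rev x a, sub_sub_sub_cancel_right] at h
  nlinarith [hg y, mul_le_mul_of_nonneg_right hx (norm_nonneg (y - a)),
    mul_le_mul_of_nonneg_left htri hc]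

theorem one_add_two_mul_abs_sub_one_sub_sq_le (y : ℝ) :
    1 + 2 * |y - 1| - (y - 1) ^ 2 ≤ max (2 - y ^ 2) (y ^ 2) := by
  rcases le_total 0 (y - 1) with h | h
  · rw [abs_of_nonneg h]
    nlinarith [le_max_right (2 - y ^ 2) (y ^ 2), sq_nonneg (y - 1)]
  · rw [abs_of_nonpos h]
    nlinarith [le_max_left (2 - y ^ 2) (y ^ 2)]

theorem prox_objective_quadratic_growth (lam x y : ℝ) (hlam : 0 < lam) (hx : |1 - x| ≤ 2 * lam) :
    1 + 1 / (2 * lam) * (1 - x) ^ 2 + (1 / (2 * lam) - 1) * (y - 1) ^ 2 ≤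
      max (2 - y ^ 2) (y ^ 2) + 1 / (2 * lam) * (y - x) ^ 2 := by
  have hf1 : max (2 - (1:ℝ) ^ 2) (1 ^ 2) = 1 := by norm_num
  have hsharp : ∀ y : ℝ, max (2 - (1:ℝ) ^ 2) (1 ^ 2) + 2 * ‖y - 1‖ - 1 * ‖y - 1‖ ^ 2 ≤
      max (2 - y ^ 2) (y ^ 2) := fun y ↦ by
    rw [hf1, Real.norm_eq_abs, sq_abs, one_mul]
    exact one_add_two_mul_abs_sub_one_sub_sq_le y
  have hc : 2 * (1 / (2 * lam)) * ‖1 - x‖ ≤ 2 := by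
    have : 1 / (2 * lam) * |1 - x| ≤ 1 := by
      rwa [div_mul_eq_mul_div, one_mul, div_le_one (by positivity)]
    rw [Real.norm_eq_abs]
    linarith
  have key := le_add_mul_norm_sub_sq_of_sharp_lower_bound
    (g := fun y : ℝ ↦ max (2 - y ^ 2) (y ^ 2)) hsharp (by positivity) hc y
  simpa only [hf1, Real.norm_eq_abs, sq_abs] using key

theorem example_prox_and_envelope (lam : ℝ) (hlam : 0 < lam) (hlam' : lam ≤ 1 / 4)
    (x : ℝ) (hx : x ∈ Set.Icc (1 - 2 * lam) (1 + 2 * lam)) :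
    (∀ y : ℝ, max (2 - (1:ℝ) ^ 2) ((1:ℝ) ^ 2) + 1 / (2 * lam) * (1 - x) ^ 2 ≤
      max (2 - y ^ 2) (y ^ 2) + 1 / (2 * lam) * (y - x) ^ 2) ∧
    (∀ y : ℝ, (∀ y' : ℝ, max (2 - y ^ 2) (y ^ 2) + 1 / (2 * lam) * (y - x) ^ 2 ≤
        max (2 - y' ^ 2) (y' ^ 2) + 1 / (2 * lam) * (y' - x) ^ 2) → y = 1) ∧
    (⨅ y : ℝ, (max (2 - y ^ 2) (y ^ 2) + 1 / (2 * lam) * (y - x) ^ 2)) =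
      1 + 1 / (2 * lam) * (x - 1) ^ 2 := by
  have hx' : |1 - x| ≤ 2 * lam := abs_le.2 ⟨by linarith [hx.2], by linarith [hx.1]⟩
  have hc : 1 < 1 / (2 * lam) := by rw [lt_div_iff₀ (by positivity)]; linarith
  have hf1 : max (2 - (1:ℝ) ^ 2) ((1:ℝ) ^ 2) = 1 := by norm_num
  have hmin : ∀ y : ℝ, 1 + 1 / (2 * lam) * (1 - x) ^ 2 ≤
      max (2 - y ^ 2) (y ^ 2) + 1 / (2 * lam) * (y - x) ^ 2 := fun y ↦
    le_trans (le_add_of_nonneg_right (mul_nonneg (sub_nonneg.2 hc.le) (sq_nonneg _)))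
      (prox_objective_quadratic_growth lam x y hlam hx')
  refine ⟨by simpa only [hf1] using hmin, fun y hymin ↦ ?_, ?_⟩
  · have h := (prox_objective_quadratic_growth lam x y hlam hx').trans (hymin 1)
    rw [hf1] at h
    have hsq : (y - 1) ^ 2 ≤ 0 := nonpos_of_mul_nonpos_right (by linarith) (sub_pos.2 hc)
    exact sub_eq_zero.1 (pow_eq_zero_iff two_ne_zero |>.1 (le_antisymm hsq (sq_nonneg _)))
  · rw [show (x - 1) ^ 2 = (1 - x) ^ 2 by ring]
    refine IsGLB.ciInf_eq (IsLeast.isGLB ⟨⟨1, ?_⟩, Set.forall_mem_range.2 hmin⟩)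
    simp only [hf1]
end

section
/- Let f(x) = max{2 − x², x²} and λ ∈ (0, 1/4]. Then the Moreau envelope e_λ f(x) = min_y { f(y) + (1/(2λ))(y−x)² } is convex on the interval [1 − 2λ, 1 + 2λ], even though f itself is not convex on any neighborhood of 1. -/
lemma env_lower (lam x y : ℝ) (hlam : 0 < lam) (hlam' : lam ≤ 1 / 4)
    (hx1 : 1 - 2 * lam ≤ x) (hx2 : x ≤ 1 + 2 * lam) :
    1 + 1 / (2 * lam) * (x - 1) ^ 2 ≤
      max (2 - y ^ 2) (y ^ 2) + 1 / (2 * lam) * (y - x) ^ 2 := by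
  set c := 1 / (2 * lam) with hcdef
  have hc0 : 0 < c := by positivity
  have hc : c * (2 * lam) = 1 := by rw [hcdef]; field_simp
  have hc2 : 2 ≤ c := by
    rw [hcdef, le_div_iff₀ (by linarith)]
    nlinarith
  rcases le_or_gt 1 y with hy | hy
  · have h1 : y ^ 2 ≤ max (2 - y ^ 2) (y ^ 2) := le_max_right _ _
    have key : 0 ≤ (y - 1) * ((y + 1) + c * (y + 1 - 2 * x)) := by
      have h2 : 0 ≤ y - 1 := by linarith
      have h3 : 0 ≤ (y + 1) + c * (y + 1 - 2 * x) := by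
        nlinarith [mul_le_mul_of_nonneg_left (show (2 : ℝ) - 2 * x ≤ y + 1 - 2 * x by linarith) hc0.le,
          mul_le_mul_of_nonneg_left (show (-(4 * lam) : ℝ) ≤ 2 - 2 * x by linarith) hc0.le]
      exact mul_nonneg h2 h3
    nlinarith [key]
  rcases le_or_gt y (-1) with hy' | hy'
  · have h1 : y ^ 2 ≤ max (2 - y ^ 2) (y ^ 2) := le_max_right _ _
    have key : 0 ≤ (y - 1) * ((y + 1) + c * (y + 1 - 2 * x)) := by
      have h2 : y - 1 ≤ 0 := by linarith
      have h3 : (y + 1) + c * (y + 1 - 2 * x) ≤ 0 := by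
        nlinarith [mul_le_mul_of_nonneg_left (show y + 1 - 2 * x ≤ -2 * x + 0 by linarith) hc0.le,
          mul_le_mul_of_nonneg_left (show (-2 : ℝ) * x ≤ -2 + 4 * lam by linarith) hc0.le]
      nlinarith [mul_nonneg (neg_nonneg.2 h2) (neg_nonneg.2 h3)]
    nlinarith [key]
  · have h1 : 2 - y ^ 2 ≤ max (2 - y ^ 2) (y ^ 2) := le_max_left _ _
    have key : 0 ≤ (1 - y) * ((1 + y) - c * (y + 1 - 2 * x)) := by
      have h2 : 0 ≤ 1 - y := by linarith
      have h3 : 0 ≤ (1 + y) - c * (y + 1 - 2 * x) := by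
        nlinarith [mul_le_mul_of_nonneg_left (show (y:ℝ) + 1 ≤ 2 by linarith) hc0.le,
          mul_le_mul_of_nonneg_left (show (1:ℝ) - 2 * lam ≤ x by linarith) hc0.le]
      exact mul_nonneg h2 h3
    nlinarith [key]

lemma env_eq (lam x : ℝ) (hlam : 0 < lam) (hlam' : lam ≤ 1 / 4)
    (hx : x ∈ Set.Icc (1 - 2 * lam) (1 + 2 * lam)) :
    (⨅ y : ℝ, (max (2 - y ^ 2) (y ^ 2) + 1 / (2 * lam) * (y - x) ^ 2)) =
      1 + 1 / (2 * lam) * (x - 1) ^ 2 := by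
  obtain ⟨hx1, hx2⟩ := hx
  have hlow := fun y => env_lower lam x y hlam hlam' hx1 hx2
  have hbdd : BddBelow (Set.range fun y : ℝ =>
      max (2 - y ^ 2) (y ^ 2) + 1 / (2 * lam) * (y - x) ^ 2) := by
    refine ⟨1 + 1 / (2 * lam) * (x - 1) ^ 2, ?_⟩
    rintro _ ⟨y, rfl⟩
    exact hlow y
  refine le_antisymm ?_ (le_ciInf hlow)
  refine le_trans (ciInf_le hbdd 1) ?_
  have : max (2 - (1:ℝ) ^ 2) ((1:ℝ) ^ 2) = 1 := by norm_num
  rw [this]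
  ring_nf
  nlinarith [sq_nonneg (x - 1)]

theorem example_envelope_locally_convex (lam : ℝ) (hlam : 0 < lam) (hlam' : lam ≤ 1 / 4) :
    ConvexOn ℝ (Set.Icc (1 - 2 * lam) (1 + 2 * lam))
      (fun x : ℝ => ⨅ y : ℝ, (max (2 - y ^ 2) (y ^ 2) + 1 / (2 * lam) * (y - x) ^ 2)) ∧
    ∀ δ : ℝ, 0 < δ →
      ¬ ConvexOn ℝ (Metric.ball (1 : ℝ) δ) (fun x : ℝ => max (2 - x ^ 2) (x ^ 2)) := by
  constructor
  · refine ⟨convex_Icc _ _, ?_⟩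
    intro x hx y hy a b ha hb hab
    have hmem : a • x + b • y ∈ Set.Icc (1 - 2 * lam) (1 + 2 * lam) :=
      (convex_Icc _ _) hx hy ha hb hab
    simp only [smul_eq_mul] at hmem ⊢
    rw [env_eq lam _ hlam hlam' hx, env_eq lam _ hlam hlam' hy,
      env_eq lam _ hlam hlam' hmem]
    have hc0 : 0 < 1 / (2 * lam) := by positivity
    have hb' : b = 1 - a := by linarith
    subst hb'
    nlinarith [mul_nonneg (mul_nonneg (mul_nonneg ha hb) hc0.le) (sq_nonneg (x - y))]
  · intro δ hδ h
    set ε : ℝ := min (δ / 2) 1 with hε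
    have hε0 : 0 < ε := lt_min (by linarith) one_pos
    have hε1 : ε ≤ 1 := min_le_right _ _
    have hεδ : ε < δ := lt_of_le_of_lt (min_le_left _ _) (by linarith)
    have hmem1 : (1 - ε : ℝ) ∈ Metric.ball (1 : ℝ) δ := by
      rw [Metric.mem_ball, Real.dist_eq]
      rw [show (1:ℝ) - ε - 1 = -ε by ring, abs_neg, abs_of_pos hε0]
      linarith
    have hmem2 : (1 : ℝ) ∈ Metric.ball (1 : ℝ) δ := by simp [hδ]
    have hkey := h.2 hmem1 hmem2 (by norm_num : (0:ℝ) ≤ 1/2) (by norm_num : (0:ℝ) ≤ 1/2)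
      (by norm_num)
    simp only [smul_eq_mul] at hkey
    have e1 : max (2 - (1 - ε) ^ 2) ((1 - ε) ^ 2) = 2 - (1 - ε) ^ 2 := by
      apply max_eq_left; nlinarith
    have e2 : max (2 - ((1:ℝ)/2 * (1 - ε) + 1/2 * 1) ^ 2) (((1:ℝ)/2 * (1 - ε) + 1/2 * 1) ^ 2)
        = 2 - ((1:ℝ)/2 * (1 - ε) + 1/2 * 1) ^ 2 := by
      apply max_eq_left; nlinarith
    have e3 : max (2 - (1:ℝ) ^ 2) ((1:ℝ) ^ 2) = 1 := by norm_num
    rw [e1, e2, e3] at hkey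
    nlinarith [hkey, pow_pos hε0 2, mul_pos hε0 hε0]
end
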